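/- arXiv:2012.02021 — 5 statements merged into one kernel-verified Lean document; each statement's English description precedes it below -/
import Mathlib

section
/- Let (X1,Y1) and (X2,Y3) be random pairs with X2 and Y3 independent and with the same marginal distributions as X1 and Y1 respectively. If P(X1 ≤ u, Y1 ≤ v) ≤ P(X2 ≤ u)·P(Y3 ≤ v) for all real u,v, and all variables are continued by adding independent continuous perturbations U (to the X's) and V (to the Y's) on [0,1], with U independent of V, then P(X1* ≤ s, Y1* ≤ t) ≤ P(X2* ≤ s)·P(Y3* ≤ t) for all real s,t; i.e., the concordance order is preserved by continuous extension. -/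
/-!
Conditioning on the perturbation `(U, V)`, which is independent of `(X₁, Y₁)`, writes the joint
distribution function of the extension as a mixture of shifted ones,
`P(X₁* ≤ s, Y₁* ≤ t) = E[P(X₁ ≤ s - U, Y₁ ≤ t - V)]`. The hypothesis bounds each shifted term by
`P(X₂ ≤ s - u) P(Y₃ ≤ t - v)`, and since `U` and `V` are independent the mixture of these products
factors as `E[P(X₂ ≤ s - U)] E[P(Y₃ ≤ t - V)] = P(X₂* ≤ s) P(Y₃* ≤ t)`.
-/

open MeasureTheory ProbabilityTheory
open scoped ENNReal

namespace ProbabilityTheory.IndepFun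

variable {Ω α β E : Type*} [MeasurableSpace Ω] {μ : Measure Ω} [IsFiniteMeasure μ]

theorem measure_mem_eq_lintegral [MeasurableSpace α] [MeasurableSpace β] {A : Ω → α} {B : Ω → β}
    (h : IndepFun A B μ) (hA : Measurable A) (hB : Measurable B) {s : Set (α × β)}
    (hs : MeasurableSet s) :
    μ {ω | (A ω, B ω) ∈ s} = ∫⁻ a, μ {ω | (a, B ω) ∈ s} ∂(μ.map A) := by
  have := Measure.isFiniteMeasure_map μ B
  change μ ((fun ω => (A ω, B ω)) ⁻¹' s) = _
  rw [← Measure.map_apply (hA.prodMk hB) hs,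
    h.map_prod_eq_prod_map_map hA.aemeasurable hB.aemeasurable, Measure.prod_apply hs]
  exact lintegral_congr fun a => Measure.map_apply hB (measurable_prodMk_left hs)

variable [AddCommGroup E] [PartialOrder E] [IsOrderedAddMonoid E] [MeasurableSpace E]
  [MeasurableAdd₂ E] [TopologicalSpace E] [OpensMeasurableSpace E] [ClosedIicTopology E]

theorem measure_add_le_eq_lintegral {X W : Ω → E} (h : IndepFun W X μ) (hX : Measurable X)
    (hW : Measurable W) (c : E) :
    μ {ω | X ω + W ω ≤ c} = ∫⁻ w, μ {ω | X ω ≤ c - w} ∂(μ.map W) := by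
  have hs : MeasurableSet {p : E × E | p.2 + p.1 ≤ c} :=
    measurableSet_Iic.preimage (measurable_snd.add measurable_fst)
  simpa only [Set.mem_ofPred_eq, le_sub_iff_add_le] using h.measure_mem_eq_lintegral hW hX hs

end ProbabilityTheory.IndepFun

theorem stmt5_general {Ω : Type*} [MeasureSpace Ω] [IsProbabilityMeasure (ℙ : Measure Ω)]
    (X1 Y1 X2 Y3 U V : Ω → ℝ)
    (hX1 : Measurable X1) (hY1 : Measurable Y1) (hX2 : Measurable X2) (hY3 : Measurable Y3)
    (hU : Measurable U) (hV : Measurable V)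
    -- concordance order hypothesis
    (hconc : ∀ u v : ℝ,
      ℙ {ω | X1 ω ≤ u ∧ Y1 ω ≤ v} ≤ ℙ {ω | X2 ω ≤ u} * ℙ {ω | Y3 ω ≤ v})
    -- U and V are independent continuous perturbations on [0,1], independent of the data
    (hUV : IndepFun U V ℙ)
    (hind : IndepFun (fun ω => (U ω, V ω)) (fun ω => (X1 ω, Y1 ω, X2 ω, Y3 ω)) ℙ) :
    ∀ s t : ℝ,
      ℙ {ω | X1 ω + U ω ≤ s ∧ Y1 ω + V ω ≤ t}
        ≤ ℙ {ω | X2 ω + U ω ≤ s} * ℙ {ω | Y3 ω + V ω ≤ t} := by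
  intro s t
  have hUV_XY : IndepFun (fun ω => (U ω, V ω)) (fun ω => (X1 ω, Y1 ω)) ℙ :=
    hind.comp measurable_id (measurable_fst.prodMk (measurable_fst.comp measurable_snd))
  have hU_X2 : IndepFun U X2 ℙ :=
    hind.comp measurable_fst (measurable_fst.comp (measurable_snd.comp measurable_snd))
  have hV_Y3 : IndepFun V Y3 ℙ :=
    hind.comp measurable_snd (measurable_snd.comp (measurable_snd.comp measurable_snd))
  set F : ℝ → ℝ≥0∞ := fun u => ℙ {ω | X2 ω ≤ s - u}
  set G : ℝ → ℝ≥0∞ := fun v => ℙ {ω | Y3 ω ≤ t - v}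
  have hF : Antitone F := fun _ _ h => measure_mono fun _ hω => hω.trans (sub_le_sub_left h s)
  have hG : Antitone G := fun _ _ h => measure_mono fun _ hω => hω.trans (sub_le_sub_left h t)
  -- in the product order on `ℝ × ℝ` the event is `(X1, Y1) + (U, V) ≤ (s, t)`
  calc ℙ {ω | X1 ω + U ω ≤ s ∧ Y1 ω + V ω ≤ t}
      = ∫⁻ w, ℙ {ω | (X1 ω, Y1 ω) ≤ (s, t) - w} ∂(Measure.map (fun ω => (U ω, V ω)) ℙ) :=
        hUV_XY.measure_add_le_eq_lintegral (hX1.prodMk hY1) (hU.prodMk hV) (s, t)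
    _ ≤ ∫⁻ w, F w.1 * G w.2 ∂(Measure.map (fun ω => (U ω, V ω)) ℙ) :=
        lintegral_mono fun w => hconc _ _
    _ = (∫⁻ u, F u ∂(Measure.map U ℙ)) * ∫⁻ v, G v ∂(Measure.map V ℙ) := by
        rw [hUV.map_prod_eq_prod_map_map hU.aemeasurable hV.aemeasurable,
          lintegral_prod_mul hF.measurable.aemeasurable hG.measurable.aemeasurable]
    _ = ℙ {ω | X2 ω + U ω ≤ s} * ℙ {ω | Y3 ω + V ω ≤ t} := by
        rw [hU_X2.measure_add_le_eq_lintegral hX2 hU, hV_Y3.measure_add_le_eq_lintegral hY3 hV]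

theorem stmt5 {Ω : Type*} [MeasureSpace Ω] [IsProbabilityMeasure (ℙ : Measure Ω)]
    (X1 Y1 X2 Y3 U V : Ω → ℝ)
    (hX1 : Measurable X1) (hY1 : Measurable Y1) (hX2 : Measurable X2) (hY3 : Measurable Y3)
    (hU : Measurable U) (hV : Measurable V)
    -- X2 and Y3 are independent, with the same marginals as X1 and Y1
    (hX2Y3 : IndepFun X2 Y3 ℙ)
    (hidX : IdentDistrib X2 X1 ℙ ℙ) (hidY : IdentDistrib Y3 Y1 ℙ ℙ)
    -- concordance order hypothesis
    (hconc : ∀ u v : ℝ,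
      ℙ {ω | X1 ω ≤ u ∧ Y1 ω ≤ v} ≤ ℙ {ω | X2 ω ≤ u} * ℙ {ω | Y3 ω ≤ v})
    -- U and V are independent continuous perturbations on [0,1], independent of the data
    (hUV : IndepFun U V ℙ)
    (hind : IndepFun (fun ω => (U ω, V ω)) (fun ω => (X1 ω, Y1 ω, X2 ω, Y3 ω)) ℙ)
    (hU01 : ∀ᵐ ω ∂ℙ, U ω ∈ Set.Icc (0 : ℝ) 1) (hV01 : ∀ᵐ ω ∂ℙ, V ω ∈ Set.Icc (0 : ℝ) 1)
    (hUcont : ∀ x : ℝ, ℙ (U ⁻¹' {x}) = 0) (hVcont : ∀ x : ℝ, ℙ (V ⁻¹' {x}) = 0) :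
    ∀ s t : ℝ,
      ℙ {ω | X1 ω + U ω ≤ s ∧ Y1 ω + V ω ≤ t}
        ≤ ℙ {ω | X2 ω + U ω ≤ s} * ℙ {ω | Y3 ω + V ω ≤ t} :=
  stmt5_general X1 Y1 X2 Y3 U V hX1 hY1 hX2 hY3 hU hV hconc hUV hind
end

section
/- If (X,Y) is positively quadrant dependent (PQD), i.e., P(X ≤ u, Y ≤ v) ≥ P(X ≤ u)P(Y ≤ v) for all u,v, and X* = X + U, Y* = Y + V with U, V independent continuous random variables on [0,1] independent of (X,Y), then (X*, Y*) is also PQD. -/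
open MeasureTheory ProbabilityTheory

namespace ProbabilityTheory

variable {Ω : Type*} [MeasurableSpace Ω] {μ : Measure Ω}

def PositivelyQuadrantDependent (X Y : Ω → ℝ) (μ : Measure Ω) : Prop :=
  ∀ u v : ℝ, μ {ω | X ω ≤ u} * μ {ω | Y ω ≤ v} ≤ μ {ω | X ω ≤ u ∧ Y ω ≤ v}

section Conditioning

variable [IsFiniteMeasure μ]

/-- Conditioning on `W`: the law of `(W, Z)` is the product of the laws of `W` and `Z`. -/
theorem IndepFun.measure_prodMk_preimage_eq_lintegral {β γ : Type*} [MeasurableSpace β]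
    [MeasurableSpace γ] {W : Ω → β} {Z : Ω → γ} (hWZ : IndepFun W Z μ) (hW : Measurable W)
    (hZ : Measurable Z) {S : Set (β × γ)} (hS : MeasurableSet S) :
    μ ((fun ω => (W ω, Z ω)) ⁻¹' S) = ∫⁻ w, μ (Z ⁻¹' (Prod.mk w ⁻¹' S)) ∂μ.map W := by
  rw [← Measure.map_apply (hW.prodMk hZ) hS,
    hWZ.map_prod_eq_prod_map_map hW.aemeasurable hZ.aemeasurable, Measure.prod_apply hS]
  exact lintegral_congr fun w => Measure.map_apply hZ (measurable_prodMk_left hS)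

variable {X Y U V : Ω → ℝ}

theorem IndepFun.measure_add_le_eq_lintegral_s6 (hUX : IndepFun U X μ) (hU : Measurable U)
    (hX : Measurable X) (u : ℝ) :
    μ {ω | X ω + U ω ≤ u} = ∫⁻ s, μ {ω | X ω ≤ u - s} ∂μ.map U := by
  simp only [le_sub_iff_add_le]
  exact hUX.measure_prodMk_preimage_eq_lintegral hU hX
    (measurableSet_le (measurable_snd.add measurable_fst) measurable_const)

theorem IndepFun.measure_add_le_and_add_le_eq_lintegral
    (hind : IndepFun (fun ω => (U ω, V ω)) (fun ω => (X ω, Y ω)) μ)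
    (hU : Measurable U) (hV : Measurable V) (hX : Measurable X) (hY : Measurable Y) (u v : ℝ) :
    μ {ω | X ω + U ω ≤ u ∧ Y ω + V ω ≤ v}
      = ∫⁻ p, μ {ω | X ω ≤ u - p.1 ∧ Y ω ≤ v - p.2} ∂μ.map (fun ω => (U ω, V ω)) := by
  simp only [le_sub_iff_add_le]
  exact hind.measure_prodMk_preimage_eq_lintegral (hU.prodMk hV) (hX.prodMk hY)
    ((measurableSet_le (measurable_snd.fst.add measurable_fst.fst) measurable_const).inter
      (measurableSet_le (measurable_snd.snd.add measurable_fst.snd) measurable_const))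

end Conditioning

theorem measurable_measure_le_sub (X : Ω → ℝ) (u : ℝ) :
    Measurable fun s : ℝ => μ {ω | X ω ≤ u - s} :=
  Antitone.measurable fun _ _ hst => measure_mono fun _ hω => hω.trans (sub_le_sub_left hst u)

/-- Averaging the PQD inequality at `(u - s, v - t)` over the law of `(U, V)`: the left side
factorizes because `U` and `V` are independent. -/
theorem PositivelyQuadrantDependent.add_of_indepFun [IsFiniteMeasure μ] {X Y U V : Ω → ℝ}
    (hXY : PositivelyQuadrantDependent X Y μ) (hUV : IndepFun U V μ)
    (hind : IndepFun (fun ω => (U ω, V ω)) (fun ω => (X ω, Y ω)) μ)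
    (hX : Measurable X) (hY : Measurable Y) (hU : Measurable U) (hV : Measurable V) :
    PositivelyQuadrantDependent (X + U) (Y + V) μ := by
  have hUX : IndepFun U X μ := hind.comp measurable_fst measurable_fst
  have hVY : IndepFun V Y μ := hind.comp measurable_snd measurable_snd
  intro u v
  simp only [Pi.add_apply]
  rw [hUX.measure_add_le_eq_lintegral_s6 hU hX, hVY.measure_add_le_eq_lintegral_s6 hV hY,
    hind.measure_add_le_and_add_le_eq_lintegral hU hV hX hY,
    ← lintegral_prod_mul (measurable_measure_le_sub X u).aemeasurable
      (measurable_measure_le_sub Y v).aemeasurable,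
    ← hUV.map_prod_eq_prod_map_map hU.aemeasurable hV.aemeasurable]
  exact lintegral_mono fun p => hXY (u - p.1) (v - p.2)

end ProbabilityTheory

theorem stmt6_general {Ω : Type*} [MeasureSpace Ω] [IsProbabilityMeasure (ℙ : Measure Ω)]
    (X Y U V : Ω → ℝ)
    (hX : Measurable X) (hY : Measurable Y) (hU : Measurable U) (hV : Measurable V)
    -- (X,Y) is positively quadrant dependent
    (hPQD : ∀ u v : ℝ, ℙ {ω | X ω ≤ u} * ℙ {ω | Y ω ≤ v} ≤ ℙ {ω | X ω ≤ u ∧ Y ω ≤ v})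
    -- U and V are independent continuous random variables on [0,1], independent of (X,Y)
    (hUV : IndepFun U V ℙ)
    (hind : IndepFun (fun ω => (U ω, V ω)) (fun ω => (X ω, Y ω)) ℙ) :
    ∀ u v : ℝ,
      ℙ {ω | X ω + U ω ≤ u} * ℙ {ω | Y ω + V ω ≤ v}
        ≤ ℙ {ω | X ω + U ω ≤ u ∧ Y ω + V ω ≤ v} :=
  PositivelyQuadrantDependent.add_of_indepFun hPQD hUV hind hX hY hU hV

theorem stmt6 {Ω : Type*} [MeasureSpace Ω] [IsProbabilityMeasure (ℙ : Measure Ω)]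
    (X Y U V : Ω → ℝ)
    (hX : Measurable X) (hY : Measurable Y) (hU : Measurable U) (hV : Measurable V)
    -- (X,Y) is positively quadrant dependent
    (hPQD : ∀ u v : ℝ, ℙ {ω | X ω ≤ u} * ℙ {ω | Y ω ≤ v} ≤ ℙ {ω | X ω ≤ u ∧ Y ω ≤ v})
    -- U and V are independent continuous random variables on [0,1], independent of (X,Y)
    (hUV : IndepFun U V ℙ)
    (hind : IndepFun (fun ω => (U ω, V ω)) (fun ω => (X ω, Y ω)) ℙ)
    (hU01 : ∀ᵐ ω ∂ℙ, U ω ∈ Set.Icc (0 : ℝ) 1) (hV01 : ∀ᵐ ω ∂ℙ, V ω ∈ Set.Icc (0 : ℝ) 1)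
    (hUcont : ∀ x : ℝ, ℙ (U ⁻¹' {x}) = 0) (hVcont : ∀ x : ℝ, ℙ (V ⁻¹' {x}) = 0) :
    ∀ u v : ℝ,
      ℙ {ω | X ω + U ω ≤ u} * ℙ {ω | Y ω + V ω ≤ v}
        ≤ ℙ {ω | X ω + U ω ≤ u ∧ Y ω + V ω ≤ v} :=
  stmt6_general X Y U V hX hY hU hV hPQD hUV hind
end

section
/- Let X, Y be nonnegative integer-valued random variables with joint pmf h, marginal CDFs F, G and pmfs f, g, and define Spearman's rho as ρ^S(X,Y) = 3(P(C) − P(D)) where P(C) = P((X1−X2)(Y1−Y3)>0) and P(D) = P((X1−X2)(Y1−Y3)<0) for independent copies (X1,Y1),(X2,Y2),(X3,Y3). Then ρ^S(X,Y) = 6 Σ_x Σ_y h(x,y)·[(1−F(x))(1−G(y)) + F(x−1)G(y−1) − (1/2) f(x)g(y)] + 3 Σ_x (f(x)² + g(x)²) − 3. -/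
/-!
Write `X' = X₂`, `Y' = Y₃`. Given `(X₁, Y₁) = (x, y)`, the pair `(X', Y')` is independent of it,
with independent coordinates distributed as `X` and `Y`; the concordance event becomes the
disjoint union of rectangles `{X' < x, Y' < y} ∪ {X' > x, Y' > y}`, so
`P(C) = Σ h(x,y) [F(x-1) G(y-1) + (1 - F(x)) (1 - G(y))]`, and likewise for `P(D)`.
Together with `Σ h = 1`, `Σ h(x,y) f(x) = P(X₁ = X₂) = Σ f²` (and its analogue for `g`) and
`F(x) = F(x-1) + f(x)`, the difference `P(C) - P(D)` rearranges into the stated sum.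
-/

open MeasureTheory ProbabilityTheory Set

theorem hasSum_toReal_of_tsum_eq {ι : Type*} {f : ι → ENNReal} {s : ENNReal}
    (hf : ∑' i, f i = s) (hs : s ≠ ⊤) : HasSum (fun i ↦ (f i).toReal) s.toReal := by
  subst hf
  rw [ENNReal.tsum_toReal_eq (ENNReal.ne_top_of_tsum_ne_top hs)]
  exact ENNReal.hasSum_toReal hs

theorem ProbabilityTheory.IdentDistrib.measureReal_mem_eq {Ω Ω' β : Type*} [MeasurableSpace Ω]
    [MeasurableSpace Ω'] [MeasurableSpace β] {μ : Measure Ω} {ν : Measure Ω'} {U : Ω → β}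
    {V : Ω' → β} (h : IdentDistrib U V μ ν) {s : Set β} (hs : MeasurableSet s) :
    μ.real (U ⁻¹' s) = ν.real (V ⁻¹' s) :=
  congrArg ENNReal.toReal (h.measure_mem_eq hs)

section Discrete

variable {Ω α β γ : Type _} [MeasurableSpace Ω] {μ : Measure Ω} [IsFiniteMeasure μ]
  [MeasurableSpace α] [Countable α] [MeasurableSingletonClass α] [MeasurableSpace β]

theorem hasSum_measureReal_preimage_singleton {W : Ω → α} (hW : Measurable W) :
    HasSum (fun a ↦ μ.real (W ⁻¹' {a})) (μ.real univ) := by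
  refine hasSum_toReal_of_tsum_eq ?_ (measure_ne_top μ univ)
  rw [← tsum_univ, tsum_measure_preimage_singleton (to_countable univ)
    (fun a _ ↦ hW (measurableSet_singleton a)), preimage_univ]

theorem hasSum_measureReal_of_indepFun {W : Ω → α} {Z : Ω → β} (hW : Measurable W)
    (hZ : Measurable Z) (hWZ : IndepFun W Z μ) {S : Set (α × β)} (hS : MeasurableSet S) :
    HasSum (fun a ↦ μ.real (W ⁻¹' {a}) * μ.real (Z ⁻¹' (Prod.mk a ⁻¹' S)))
      (μ.real {ω | (W ω, Z ω) ∈ S}) := by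
  have hlaw := (indepFun_iff_map_prod_eq_prod_map_map hW.aemeasurable hZ.aemeasurable).1 hWZ
  simp only [measureReal_def, ← ENNReal.toReal_mul]
  refine hasSum_toReal_of_tsum_eq ?_ (measure_ne_top μ _)
  change _ = μ ((fun ω ↦ (W ω, Z ω)) ⁻¹' S)
  rw [← Measure.map_apply (hW.prodMk hZ) hS, hlaw, Measure.prod_apply hS, lintegral_countable']
  congr! 2 with a
  rw [Measure.map_apply hZ (measurable_prodMk_left hS),
    Measure.map_apply hW (measurableSet_singleton a), mul_comm]

theorem measureReal_union_prod_of_indepFun [MeasurableSpace γ] {U : Ω → β} {V : Ω → γ}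
    (hU : Measurable U) (hV : Measurable V) (hUV : IndepFun U V μ) {s₁ s₂ : Set β}
    {t₁ t₂ : Set γ} (hs₁ : MeasurableSet s₁) (hs₂ : MeasurableSet s₂) (ht₁ : MeasurableSet t₁)
    (ht₂ : MeasurableSet t₂) (hs : Disjoint s₁ s₂) :
    μ.real ((fun ω ↦ (U ω, V ω)) ⁻¹' (s₁ ×ˢ t₁ ∪ s₂ ×ˢ t₂))
      = μ.real (U ⁻¹' s₁) * μ.real (V ⁻¹' t₁) + μ.real (U ⁻¹' s₂) * μ.real (V ⁻¹' t₂) := by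
  have hrect : ∀ s t, MeasurableSet s → MeasurableSet t →
      μ.real ((fun ω ↦ (U ω, V ω)) ⁻¹' (s ×ˢ t)) = μ.real (U ⁻¹' s) * μ.real (V ⁻¹' t) :=
    fun s t hs ht ↦ by
      rw [mk_preimage_prod, measureReal_def, hUV.measure_inter_preimage_eq_mul s t hs ht,
        ENNReal.toReal_mul]
      rfl
  rw [preimage_union, measureReal_union ((disjoint_prod.2 (Or.inl hs)).preimage _)
    ((hU.prodMk hV) (hs₂.prod ht₂)), hrect _ _ hs₁ ht₁, hrect _ _ hs₂ ht₂]

variable [Countable β] [MeasurableSingletonClass β]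

theorem hasSum_measureReal_eq_comp_of_indepFun {W : Ω → α} {U : Ω → β} (hW : Measurable W)
    (hU : Measurable U) (hWU : IndepFun W U μ) (φ : α → β) :
    HasSum (fun a ↦ μ.real (W ⁻¹' {a}) * μ.real (U ⁻¹' {φ a}))
      (μ.real {ω | U ω = φ (W ω)}) :=
  hasSum_measureReal_of_indepFun hW hU hWU (S := {q | q.2 = φ q.1}) (to_countable _).measurableSet

variable [MeasurableSpace γ] [Countable γ] [MeasurableSingletonClass γ]

theorem hasSum_measureReal_of_sections_eq_union_prod {W : Ω → α} {U : Ω → β} {V : Ω → γ}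
    (hW : Measurable W) (hU : Measurable U) (hV : Measurable V)
    (hWUV : IndepFun W (fun ω ↦ (U ω, V ω)) μ) (hUV : IndepFun U V μ) {S : Set (α × β × γ)}
    {s₁ s₂ : α → Set β} {t₁ t₂ : α → Set γ}
    (hS : ∀ a, Prod.mk a ⁻¹' S = s₁ a ×ˢ t₁ a ∪ s₂ a ×ˢ t₂ a)
    (hs : ∀ a, Disjoint (s₁ a) (s₂ a)) :
    HasSum (fun a ↦ μ.real (W ⁻¹' {a}) * (μ.real (U ⁻¹' s₁ a) * μ.real (V ⁻¹' t₁ a)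
        + μ.real (U ⁻¹' s₂ a) * μ.real (V ⁻¹' t₂ a)))
      (μ.real {ω | (W ω, U ω, V ω) ∈ S}) := by
  convert hasSum_measureReal_of_indepFun hW (hU.prodMk hV) hWUV
    (to_countable S).measurableSet using 3 with a
  rw [hS a, measureReal_union_prod_of_indepFun hU hV hUV (to_countable _).measurableSet
    (to_countable _).measurableSet (to_countable _).measurableSet (to_countable _).measurableSet
    (hs a)]

end Discrete

section NatValued

variable {Ω : Type _} [MeasurableSpace Ω] {μ : Measure Ω} {X : Ω → ℕ}

theorem measureReal_le_eq_lt_add_eq [IsFiniteMeasure μ] (hX : Measurable X) (x : ℕ) :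
    μ.real {ω | X ω ≤ x} = μ.real {ω | X ω < x} + μ.real {ω | X ω = x} := by
  rw [show {ω | X ω ≤ x} = {ω | X ω < x} ∪ {ω | X ω = x} from
      ext fun _ ↦ le_iff_lt_or_eq (α := ℕ),
    measureReal_union (disjoint_left.2 fun ω h₁ h₂ ↦ h₁.ne h₂)
      (measurableSet_eq_fun hX measurable_const)]

theorem measureReal_lt_eq_one_sub_le [IsProbabilityMeasure μ] (hX : Measurable X) (x : ℕ) :
    μ.real {ω | x < X ω} = 1 - μ.real {ω | X ω ≤ x} := by
  rw [show {ω | x < X ω} = (X ⁻¹' Iic x)ᶜ from ext fun _ ↦ lt_iff_not_ge (α := ℕ),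
    probReal_compl_eq_one_sub (hX measurableSet_Iic)]
  rfl

end NatValued

theorem hasSum_spearman_summand {α β : Type*} {h : α → β → ℝ} {F Fm f : α → ℝ}
    {G Gm g : β → ℝ} {c d sf sg : ℝ} (hF : ∀ x, F x = Fm x + f x) (hG : ∀ y, G y = Gm y + g y)
    (hc : HasSum (fun p : α × β ↦ h p.1 p.2 * (Fm p.1 * Gm p.2 + (1 - F p.1) * (1 - G p.2))) c)
    (hd : HasSum (fun p : α × β ↦ h p.1 p.2 * (Fm p.1 * (1 - G p.2) + (1 - F p.1) * Gm p.2)) d)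
    (h₁ : HasSum (fun p : α × β ↦ h p.1 p.2) 1)
    (hf : HasSum (fun p : α × β ↦ h p.1 p.2 * f p.1) sf)
    (hg : HasSum (fun p : α × β ↦ h p.1 p.2 * g p.2) sg) :
    HasSum (fun p : α × β ↦ h p.1 p.2 *
        ((1 - F p.1) * (1 - G p.2) + Fm p.1 * Gm p.2 - 1 / 2 * f p.1 * g p.2))
      ((c - d + 1 - sf - sg) / 2) := by
  refine (((((hc.sub hd).add h₁).sub hf).sub hg).div_const 2).congr_fun fun p ↦ ?_
  rw [hF, hG]
  ring

theorem setOf_concordant (p : ℕ × ℕ) :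
    {q : ℕ × ℕ | ((p.1 : ℤ) - q.1) * ((p.2 : ℤ) - q.2) > 0}
      = Iio p.1 ×ˢ Iio p.2 ∪ Ioi p.1 ×ˢ Ioi p.2 := by
  ext q
  simp only [mem_ofPred_eq, mem_union, mem_prod, mem_Iio, mem_Ioi, gt_iff_lt, mul_pos_iff,
    sub_pos, sub_neg]
  omega

theorem setOf_discordant (p : ℕ × ℕ) :
    {q : ℕ × ℕ | ((p.1 : ℤ) - q.1) * ((p.2 : ℤ) - q.2) < 0}
      = Iio p.1 ×ˢ Ioi p.2 ∪ Ioi p.1 ×ˢ Iio p.2 := by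
  ext q
  simp only [mem_ofPred_eq, mem_union, mem_prod, mem_Iio, mem_Ioi, mul_neg_iff, sub_pos, sub_neg]
  omega

section SpearmanRho

variable {Ω : Type _} [MeasureSpace Ω] [IsProbabilityMeasure (ℙ : Measure Ω)]
  {XY : Fin 3 → Ω → ℕ × ℕ}

theorem hasSum_measureReal_spearmanTriple (hm : ∀ i, Measurable (XY i)) (hindep : iIndepFun XY ℙ)
    (hid : ∀ i, IdentDistrib (XY i) (XY 0) ℙ ℙ) {S : Set ((ℕ × ℕ) × ℕ × ℕ)}
    {s₁ s₂ t₁ t₂ : ℕ × ℕ → Set ℕ}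
    (hS : ∀ p, Prod.mk p ⁻¹' S = s₁ p ×ˢ t₁ p ∪ s₂ p ×ˢ t₂ p)
    (hs : ∀ p, Disjoint (s₁ p) (s₂ p)) :
    HasSum (fun p ↦ (ℙ).real (XY 0 ⁻¹' {p}) *
        ((ℙ).real {ω | (XY 0 ω).1 ∈ s₁ p} * (ℙ).real {ω | (XY 0 ω).2 ∈ t₁ p}
          + (ℙ).real {ω | (XY 0 ω).1 ∈ s₂ p} * (ℙ).real {ω | (XY 0 ω).2 ∈ t₂ p}))
      ((ℙ).real {ω | (XY 0 ω, (XY 1 ω).1, (XY 2 ω).2) ∈ S}) := by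
  have hWUV : IndepFun (XY 0) (fun ω ↦ ((XY 1 ω).1, (XY 2 ω).2)) ℙ :=
    ((hindep.indepFun_prodMk hm 1 2 0 (by decide) (by decide)).comp
      (measurable_fst.fst.prodMk measurable_snd.snd) measurable_id).symm
  have hUV : IndepFun (fun ω ↦ (XY 1 ω).1) (fun ω ↦ (XY 2 ω).2) ℙ :=
    (hindep.indepFun (by decide : (1 : Fin 3) ≠ 2)).comp measurable_fst measurable_snd
  have hU (s : Set ℕ) : (ℙ).real ((fun ω ↦ (XY 1 ω).1) ⁻¹' s) = (ℙ).real {ω | (XY 0 ω).1 ∈ s} :=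
    ((hid 1).comp measurable_fst).measureReal_mem_eq (to_countable s).measurableSet
  have hV (t : Set ℕ) : (ℙ).real ((fun ω ↦ (XY 2 ω).2) ⁻¹' t) = (ℙ).real {ω | (XY 0 ω).2 ∈ t} :=
    ((hid 2).comp measurable_snd).measureReal_mem_eq (to_countable t).measurableSet
  simpa only [hU, hV] using hasSum_measureReal_of_sections_eq_union_prod (hm 0)
    (hm 1).fst (hm 2).snd hWUV hUV hS hs


theorem hasSum_concordance (hm : ∀ i, Measurable (XY i)) (hindep : iIndepFun XY ℙ)
    (hid : ∀ i, IdentDistrib (XY i) (XY 0) ℙ ℙ) :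
    HasSum (fun p ↦ (ℙ).real (XY 0 ⁻¹' {p}) *
        ((ℙ).real {ω | (XY 0 ω).1 < p.1} * (ℙ).real {ω | (XY 0 ω).2 < p.2}
          + (1 - (ℙ).real {ω | (XY 0 ω).1 ≤ p.1}) * (1 - (ℙ).real {ω | (XY 0 ω).2 ≤ p.2})))
      ((ℙ).real {ω | (((XY 0 ω).1 : ℤ) - ((XY 1 ω).1 : ℤ)) *
        (((XY 0 ω).2 : ℤ) - ((XY 2 ω).2 : ℤ)) > 0}) := by
  have h := hasSum_measureReal_spearmanTriple hm hindep hid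
    (S := {q | ((q.1.1 : ℤ) - q.2.1) * ((q.1.2 : ℤ) - q.2.2) > 0}) setOf_concordant
    fun _ ↦ Iio_disjoint_Ioi_same
  simp only [mem_Iio, mem_Ioi, measureReal_lt_eq_one_sub_le (hm 0).fst,
    measureReal_lt_eq_one_sub_le (hm 0).snd] at h
  exact h

theorem hasSum_discordance (hm : ∀ i, Measurable (XY i)) (hindep : iIndepFun XY ℙ)
    (hid : ∀ i, IdentDistrib (XY i) (XY 0) ℙ ℙ) :
    HasSum (fun p ↦ (ℙ).real (XY 0 ⁻¹' {p}) *
        ((ℙ).real {ω | (XY 0 ω).1 < p.1} * (1 - (ℙ).real {ω | (XY 0 ω).2 ≤ p.2})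
          + (1 - (ℙ).real {ω | (XY 0 ω).1 ≤ p.1}) * (ℙ).real {ω | (XY 0 ω).2 < p.2}))
      ((ℙ).real {ω | (((XY 0 ω).1 : ℤ) - ((XY 1 ω).1 : ℤ)) *
        (((XY 0 ω).2 : ℤ) - ((XY 2 ω).2 : ℤ)) < 0}) := by
  have h := hasSum_measureReal_spearmanTriple hm hindep hid
    (S := {q | ((q.1.1 : ℤ) - q.2.1) * ((q.1.2 : ℤ) - q.2.2) < 0}) setOf_discordant
    fun _ ↦ Iio_disjoint_Ioi_same
  simp only [mem_Iio, mem_Ioi, measureReal_lt_eq_one_sub_le (hm 0).fst,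
    measureReal_lt_eq_one_sub_le (hm 0).snd] at h
  exact h

theorem hasSum_tie (hm : ∀ i, Measurable (XY i)) (hindep : iIndepFun XY ℙ)
    (hid : ∀ i, IdentDistrib (XY i) (XY 0) ℙ ℙ) {i : Fin 3} (hi : i ≠ 0) {π : ℕ × ℕ → ℕ}
    (hπ : Measurable π) :
    HasSum (fun p ↦ (ℙ).real (XY 0 ⁻¹' {p}) * (ℙ).real {ω | π (XY 0 ω) = π p})
      ((ℙ).real {ω | π (XY i ω) = π (XY 0 ω)}) := by
  have h := hasSum_measureReal_eq_comp_of_indepFun (hm 0) (hπ.comp (hm i))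
    ((hindep.indepFun hi.symm).comp measurable_id hπ) π
  simp only [((hid i).comp hπ).measureReal_mem_eq (measurableSet_singleton _)] at h
  exact h

theorem hasSum_sq_tie (hm : ∀ i, Measurable (XY i)) (hindep : iIndepFun XY ℙ)
    (hid : ∀ i, IdentDistrib (XY i) (XY 0) ℙ ℙ) {i : Fin 3} (hi : i ≠ 0) {π : ℕ × ℕ → ℕ}
    (hπ : Measurable π) :
    HasSum (fun x ↦ (ℙ).real {ω | π (XY 0 ω) = x} ^ 2)
      ((ℙ).real {ω | π (XY i ω) = π (XY 0 ω)}) := by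
  have h := hasSum_measureReal_eq_comp_of_indepFun (hπ.comp (hm 0)) (hπ.comp (hm i))
    ((hindep.indepFun hi.symm).comp hπ hπ) id
  simp only [id, ((hid i).comp hπ).measureReal_mem_eq (measurableSet_singleton _), ← sq] at h
  exact h

end SpearmanRho

theorem stmt13 {Ω : Type*} [MeasureSpace Ω] [IsProbabilityMeasure (ℙ : Measure Ω)]
    (XY : Fin 3 → Ω → ℕ × ℕ) (hm : ∀ i, Measurable (XY i))
    (hindep : iIndepFun XY ℙ)
    (hid : ∀ i, IdentDistrib (XY i) (XY 0) ℙ ℙ)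
    -- marginal CDFs, left limits, and pmfs of (X,Y) = XY 0
    (F G Fm Gm f g : ℕ → ℝ) (h : ℕ → ℕ → ℝ)
    (hF : ∀ x, F x = (ℙ {ω | (XY 0 ω).1 ≤ x}).toReal)
    (hG : ∀ y, G y = (ℙ {ω | (XY 0 ω).2 ≤ y}).toReal)
    (hFm : ∀ x, Fm x = (ℙ {ω | (XY 0 ω).1 < x}).toReal)
    (hGm : ∀ y, Gm y = (ℙ {ω | (XY 0 ω).2 < y}).toReal)
    (hf : ∀ x, f x = (ℙ {ω | (XY 0 ω).1 = x}).toReal)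
    (hg : ∀ y, g y = (ℙ {ω | (XY 0 ω).2 = y}).toReal)
    (hh : ∀ x y, h x y = (ℙ {ω | (XY 0 ω).1 = x ∧ (XY 0 ω).2 = y}).toReal)
    -- Spearman's rho, defined from concordance and discordance probabilities
    (ρ : ℝ)
    (hρ : ρ = 3 * ((ℙ {ω | (((XY 0 ω).1 : ℤ) - ((XY 1 ω).1 : ℤ)) *
                            (((XY 0 ω).2 : ℤ) - ((XY 2 ω).2 : ℤ)) > 0}).toReal
                   - (ℙ {ω | (((XY 0 ω).1 : ℤ) - ((XY 1 ω).1 : ℤ)) *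
                            (((XY 0 ω).2 : ℤ) - ((XY 2 ω).2 : ℤ)) < 0}).toReal)) :
    ρ = 6 * ∑' (x : ℕ) (y : ℕ),
            h x y * ((1 - F x) * (1 - G y) + Fm x * Gm y - (1 / 2) * f x * g y)
        + 3 * ∑' x : ℕ, (f x ^ 2 + g x ^ 2) - 3 := by
  simp only [← measureReal_def] at hF hG hFm hGm hf hg hh hρ
  have hp (p : ℕ × ℕ) : (ℙ).real (XY 0 ⁻¹' {p}) = h p.1 p.2 := by
    rw [hh]
    congr 1
    ext ω
    exact Prod.ext_iff
  have hC := hasSum_concordance hm hindep hid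
  have hD := hasSum_discordance hm hindep hid
  have h₁ := hasSum_measureReal_preimage_singleton (μ := ℙ) (hm 0)
  have hX := hasSum_tie hm hindep hid (i := 1) (by decide) measurable_fst
  have hY := hasSum_tie hm hindep hid (i := 2) (by decide) measurable_snd
  have hX₂ := hasSum_sq_tie hm hindep hid (i := 1) (by decide) measurable_fst
  have hY₂ := hasSum_sq_tie hm hindep hid (i := 2) (by decide) measurable_snd
  simp only [hp, ← hF, ← hG, ← hFm, ← hGm, ← hf, ← hg, probReal_univ] at hC hD h₁ hX hY hX₂ hY₂
  have hsum := hasSum_spearman_summand (h := h)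
    (fun x ↦ by rw [hF, hFm, hf, measureReal_le_eq_lt_add_eq (hm 0).fst])
    (fun y ↦ by rw [hG, hGm, hg, measureReal_le_eq_lt_add_eq (hm 0).snd]) hC hD h₁ hX hY
  rw [← hsum.summable.tsum_prod, hsum.tsum_eq, (hX₂.add hY₂).tsum_eq, hρ]
  ring
end

section
/- Let X, Y be Bernoulli random variables with success probabilities p_X, p_Y coupled by a copula C. Then Spearman's rho equals ρ^S(X,Y) = −3 + 3 C(1−p_X, 1−p_Y) + 3 p_X + 3 p_Y − 3 p_X p_Y. -/
/-!
Both marginals are supported on `{0, 1}`, so every series in the discrete formula reduces to a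
finite sum over `{0, 1}` (resp. `{0, 1}²`). The joint pmf on that square is read off the copula
at the grid `{0, 1 - p_X, 1} × {0, 1 - p_Y, 1}`, where the boundary conditions of `C` leave the
single unknown `C (1 - p_X) (1 - p_Y)`; the rest is algebra.
-/

/-- A bivariate copula: grounded, with uniform margins, and 2-increasing on [0,1]². -/
structure IsCopula (C : ℝ → ℝ → ℝ) : Prop where
  grounded_left : ∀ v ∈ Set.Icc (0 : ℝ) 1, C 0 v = 0
  grounded_right : ∀ u ∈ Set.Icc (0 : ℝ) 1, C u 0 = 0
  margin_left : ∀ u ∈ Set.Icc (0 : ℝ) 1, C u 1 = u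
  margin_right : ∀ v ∈ Set.Icc (0 : ℝ) 1, C 1 v = v
  twoIncreasing : ∀ u1 u2 v1 v2 : ℝ, u1 ∈ Set.Icc (0 : ℝ) 1 → u2 ∈ Set.Icc (0 : ℝ) 1 →
    v1 ∈ Set.Icc (0 : ℝ) 1 → v2 ∈ Set.Icc (0 : ℝ) 1 → u1 ≤ u2 → v1 ≤ v2 →
    0 ≤ C u2 v2 - C u1 v2 - C u2 v1 + C u1 v1

open Finset

structure IsBernoulliCDF (F : ℤ → ℝ) (p : ℝ) : Prop where
  eq_zero_of_neg : ∀ x : ℤ, x < 0 → F x = 0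
  apply_zero : F 0 = 1 - p
  eq_one_of_one_le : ∀ x : ℤ, 1 ≤ x → F x = 1

namespace IsBernoulliCDF

variable {F : ℤ → ℝ} {p : ℝ}

lemma apply_neg_one (hF : IsBernoulliCDF F p) : F (-1) = 0 :=
  hF.eq_zero_of_neg _ (by norm_num)

lemma apply_one (hF : IsBernoulliCDF F p) : F 1 = 1 :=
  hF.eq_one_of_one_le _ le_rfl

lemma apply_sub_one_of_two_le (hF : IsBernoulliCDF F p) {x : ℤ} (hx : 2 ≤ x) :
    F (x - 1) = F x := by
  rw [hF.eq_one_of_one_le x (by omega), hF.eq_one_of_one_le (x - 1) (by omega)]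

end IsBernoulliCDF

lemma tsum_eq_add_of_forall_two_le {M : Type*} [AddCommMonoid M] [TopologicalSpace M]
    {u : ℕ → M} (hu : ∀ n, 2 ≤ n → u n = 0) : ∑' n, u n = u 0 + u 1 := by
  rw [tsum_eq_sum (s := range 2) fun n hn => hu n (by simp at hn; omega), sum_range_succ,
    sum_range_one]

lemma tsum_tsum_eq_of_forall_two_le {M : Type*} [AddCommMonoid M] [TopologicalSpace M]
    {u : ℕ → ℕ → M} (hu : ∀ m n, 2 ≤ m ∨ 2 ≤ n → u m n = 0) :
    ∑' m, ∑' n, u m n = (u 0 0 + u 0 1) + (u 1 0 + u 1 1) := by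
  have hrow : ∀ m, ∑' n, u m n = u m 0 + u m 1 := fun m =>
    tsum_eq_add_of_forall_two_le fun n hn => hu m n (.inr hn)
  simp only [hrow]
  exact tsum_eq_add_of_forall_two_le fun m hm => by simp [hu m _ (.inl hm)]

theorem stmt16 (C : ℝ → ℝ → ℝ) (hC : IsCopula C)
    (pX pY : ℝ) (hpX : pX ∈ Set.Icc (0 : ℝ) 1) (hpY : pY ∈ Set.Icc (0 : ℝ) 1)
    -- Bernoulli marginal CDFs and pmfs
    (F G f g : ℤ → ℝ)
    (hFneg : ∀ x : ℤ, x < 0 → F x = 0) (hF0 : F 0 = 1 - pX) (hF1 : ∀ x : ℤ, 1 ≤ x → F x = 1)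
    (hGneg : ∀ y : ℤ, y < 0 → G y = 0) (hG0 : G 0 = 1 - pY) (hG1 : ∀ y : ℤ, 1 ≤ y → G y = 1)
    (hf : ∀ x : ℤ, f x = F x - F (x - 1)) (hg : ∀ y : ℤ, g y = G y - G (y - 1))
    -- joint pmf induced by the copula
    (h : ℤ → ℤ → ℝ)
    (hh : ∀ x y : ℤ, h x y =
      C (F x) (G y) - C (F (x - 1)) (G y) - C (F x) (G (y - 1)) + C (F (x - 1)) (G (y - 1)))
    -- Spearman's rho given by the discrete copula formula
    (ρ : ℝ)
    (hρ : ρ = 6 * ∑' (x : ℕ) (y : ℕ),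
            h (x : ℤ) (y : ℤ) * ((1 - F x) * (1 - G y) + F ((x : ℤ) - 1) * G ((y : ℤ) - 1)
              - (1 / 2) * f x * g y)
          + 3 * ∑' x : ℕ, (f x ^ 2 + g x ^ 2) - 3) :
    ρ = -3 + 3 * C (1 - pX) (1 - pY) + 3 * pX + 3 * pY - 3 * pX * pY := by
  have hF : IsBernoulliCDF F pX := ⟨hFneg, hF0, hF1⟩
  have hG : IsBernoulliCDF G pY := ⟨hGneg, hG0, hG1⟩
  have hpmf_vanish : ∀ n : ℕ, 2 ≤ n → f n = 0 ∧ g n = 0 := fun n hn => by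
    rw [hf, hg, hF.apply_sub_one_of_two_le (by omega), hG.apply_sub_one_of_two_le (by omega)]
    simp
  have hjoint_vanish : ∀ m n : ℕ, 2 ≤ m ∨ 2 ≤ n → h m n = 0 := by
    rintro m n (hm | hn)
    · rw [hh, hF.apply_sub_one_of_two_le (by omega)]; ring
    · rw [hh, hG.apply_sub_one_of_two_le (by omega)]; ring
  rw [hρ, tsum_tsum_eq_of_forall_two_le fun m n hmn => by simp [hjoint_vanish m n hmn],
    tsum_eq_add_of_forall_two_le fun n hn => by simp [hpmf_vanish n hn]]
  have hqX : 1 - pX ∈ Set.Icc (0 : ℝ) 1 := ⟨by linarith [hpX.2], by linarith [hpX.1]⟩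
  have hqY : 1 - pY ∈ Set.Icc (0 : ℝ) 1 := ⟨by linarith [hpY.2], by linarith [hpY.1]⟩
  have h0 : (0 : ℝ) ∈ Set.Icc (0 : ℝ) 1 := by norm_num
  have h1 : (1 : ℝ) ∈ Set.Icc (0 : ℝ) 1 := by norm_num
  norm_num [hh, hf, hg, hF.apply_neg_one, hF0, hF.apply_one, hG.apply_neg_one, hG0, hG.apply_one,
    hC.grounded_left _ h0, hC.grounded_left _ h1, hC.grounded_left _ hqY,
    hC.grounded_right _ h1, hC.grounded_right _ hqX, hC.margin_left _ h1,
    hC.margin_left _ hqX, hC.margin_right _ hqY]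
  ring
end

section
/- For Bernoulli random variables X, Y with success probabilities p_X, p_Y ∈ [0,1] coupled by any copula C, Spearman's rho ρ^S(X,Y) = −3 + 3C(1−p_X,1−p_Y) + 3p_X + 3p_Y − 3p_X p_Y satisfies −3/4 ≤ ρ^S(X,Y) ≤ 3/4, with the extremes attained when p_X = p_Y = 1/2 and C is the lower/upper Fréchet–Hoeffding bound respectively. -/
/-! With `u = 1 - pX` and `v = 1 - pY` the formula reads `ρ = 3 (C(u,v) - u v)`, so it suffices
to bound `min u v - u v` above and `max (u + v - 1) 0 - u v` below by `± 1/4`; both reduce to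
`t (1 - t) ≤ 1/4`. -/

lemma min_sub_mul_le_one_div_four {u v : ℝ} (hu : 0 ≤ u) (hv : 0 ≤ v) :
    min u v - u * v ≤ 1 / 4 := by
  rcases le_total u v with h | h
  · rw [min_eq_left h]
    nlinarith [sq_nonneg (1 - 2 * u), mul_le_mul_of_nonneg_left h hu]
  · rw [min_eq_right h]
    nlinarith [sq_nonneg (1 - 2 * v), mul_le_mul_of_nonneg_left h hv]

lemma neg_one_div_four_le_max_sub_mul {u v : ℝ} (hu : u ∈ Set.Icc (0 : ℝ) 1)
    (hv : v ∈ Set.Icc (0 : ℝ) 1) : -(1 / 4) ≤ max (u + v - 1) 0 - u * v := by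
  obtain ⟨hu0, hu1⟩ := hu
  obtain ⟨hv0, hv1⟩ := hv
  rcases le_total (u + v - 1) 0 with h | h
  · rw [max_eq_right h]
    nlinarith [sq_nonneg (u - v), mul_nonneg (add_nonneg hu0 hv0) (add_nonneg hu0 hv0)]
  · rw [max_eq_left h]
    -- `u + v - 1 - u v = -(1 - u)(1 - v)`
    nlinarith [sq_nonneg (u - v)]

theorem stmt18 (C : ℝ → ℝ → ℝ)
    -- C satisfies the Fréchet–Hoeffding bounds
    (hFH : ∀ u ∈ Set.Icc (0 : ℝ) 1, ∀ v ∈ Set.Icc (0 : ℝ) 1,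
      max (u + v - 1) 0 ≤ C u v ∧ C u v ≤ min u v)
    (pX pY : ℝ) (hpX : pX ∈ Set.Icc (0 : ℝ) 1) (hpY : pY ∈ Set.Icc (0 : ℝ) 1)
    (ρ : ℝ)
    (hρ : ρ = -3 + 3 * C (1 - pX) (1 - pY) + 3 * pX + 3 * pY - 3 * pX * pY) :
    (-(3 / 4) ≤ ρ ∧ ρ ≤ 3 / 4)
    -- the upper extreme is attained at pX = pY = 1/2 with the upper Fréchet–Hoeffding copula
    ∧ -3 + 3 * min (1 - (1 / 2 : ℝ)) (1 - (1 / 2 : ℝ)) + 3 * (1 / 2) + 3 * (1 / 2)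
        - 3 * (1 / 2) * (1 / 2) = 3 / 4
    -- the lower extreme is attained at pX = pY = 1/2 with the lower Fréchet–Hoeffding copula
    ∧ -3 + 3 * max ((1 - (1 / 2 : ℝ)) + (1 - (1 / 2 : ℝ)) - 1) 0 + 3 * (1 / 2) + 3 * (1 / 2)
        - 3 * (1 / 2) * (1 / 2) = -(3 / 4) := by
  have hu : 1 - pX ∈ Set.Icc (0 : ℝ) 1 := ⟨by linarith [hpX.2], by linarith [hpX.1]⟩
  have hv : 1 - pY ∈ Set.Icc (0 : ℝ) 1 := ⟨by linarith [hpY.2], by linarith [hpY.1]⟩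
  have hρ' : ρ = 3 * (C (1 - pX) (1 - pY) - (1 - pX) * (1 - pY)) := by rw [hρ]; ring
  obtain ⟨hlo, hhi⟩ := hFH _ hu _ hv
  have hmax := neg_one_div_four_le_max_sub_mul hu hv
  have hmin := min_sub_mul_le_one_div_four hu.1 hv.1
  refine ⟨⟨by linarith, by linarith⟩, by norm_num, by norm_num⟩
end
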